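/- For every complex number q with |q| < 1, A(q) = -∑_{k=1}^∞ ∑_{n=1}^∞ q^{2kn+k}/((1-q^{2n})(1+q^{2k-1})) + Z(q). -/

import Mathlib

/-!
Write the `(k, m)` term of `A(q)` as `q^N / (1 + q^N)` times `q^(k+1) / (1 + q^(2k+1))`, with
`N = k + 1 + m`. Expanding `q^N / (1 + q^N) = ∑_j (-1)^j q^(N(j+1))` and summing the geometric
series over `N ≥ k + 1` first turns the `k`-th row into
`∑_j (-1)^j q^((k+1)(j+1)) / (1 - q^(j+1))` times the same factor. The terms with `j + 1` odd give
`Z(q)` after transposing the double sum, those with `j + 1` even give the subtracted series. Every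
interchange is justified by the bound `‖q‖^(k+n) / (1 - ‖q‖)^2` on the terms.
-/

open Complex

noncomputable def Aser (q : ℂ) : ℂ :=
  ∑' k : ℕ, ∑' m : ℕ,
    q ^ ((k + 1) + (k + 1 + m)) / ((1 + q ^ (k + 1 + m)) * (1 + q ^ (2 * k + 1)))

noncomputable def Zser (q : ℂ) : ℂ :=
  ∑' k : ℕ, ∑' n : ℕ,
    q ^ (2 * (k + 1) * (n + 1)) / ((1 + q ^ (2 * n + 1)) * (1 - q ^ (2 * k + 1)))

section

variable {𝕜 : Type*} [NormedField 𝕜] {q : 𝕜}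

theorem one_sub_norm_le_norm_one_add_pow (hq : ‖q‖ ≤ 1) {n : ℕ} (hn : n ≠ 0) :
    1 - ‖q‖ ≤ ‖1 + q ^ n‖ := by
  have := norm_sub_norm_le (1 : 𝕜) (-q ^ n)
  rw [norm_one, norm_neg, sub_neg_eq_add, norm_pow] at this
  linarith [pow_le_of_le_one (norm_nonneg q) hq hn]

theorem one_sub_norm_le_norm_one_sub_pow (hq : ‖q‖ ≤ 1) {n : ℕ} (hn : n ≠ 0) :
    1 - ‖q‖ ≤ ‖1 - q ^ n‖ := by
  have := norm_sub_norm_le (1 : 𝕜) (q ^ n)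
  rw [norm_one, norm_pow] at this
  linarith [pow_le_of_le_one (norm_nonneg q) hq hn]

theorem norm_pow_div_le (hq : ‖q‖ ≤ 1) {e m : ℕ} (hme : m ≤ e) {d : 𝕜} {c : ℝ} (hc : 0 < c)
    (hd : c ≤ ‖d‖) : ‖q ^ e / d‖ ≤ c⁻¹ * ‖q‖ ^ m := by
  rw [norm_div, norm_pow, div_eq_inv_mul]
  exact mul_le_mul (inv_anti₀ hc hd) (pow_le_pow_of_le_one (norm_nonneg q) hq hme)
    (by positivity) (by positivity)

theorem norm_pow_div_mul_le (hq : ‖q‖ < 1) {e m : ℕ} (hme : m ≤ e) {d₁ d₂ : 𝕜}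
    (hd₁ : 1 - ‖q‖ ≤ ‖d₁‖) (hd₂ : 1 - ‖q‖ ≤ ‖d₂‖) :
    ‖q ^ e / (d₁ * d₂)‖ ≤ ((1 - ‖q‖) * (1 - ‖q‖))⁻¹ * ‖q‖ ^ m := by
  have hpos : 0 < 1 - ‖q‖ := sub_pos.mpr hq
  refine norm_pow_div_le hq.le hme (by positivity) ?_
  rw [norm_mul]
  exact mul_le_mul hd₁ hd₂ hpos.le (hpos.le.trans hd₁)

theorem summable_of_norm_le_mul_pow_add {E : Type*} [NormedAddCommGroup E] [CompleteSpace E]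
    {F : ℕ × ℕ → E} {r C : ℝ} (hr₀ : 0 ≤ r) (hr₁ : r < 1)
    (hF : ∀ p, ‖F p‖ ≤ C * r ^ (p.1 + p.2)) : Summable F := by
  have hgeo := summable_geometric_of_lt_one hr₀ hr₁
  have hnonneg : 0 ≤ fun n : ℕ => r ^ n := fun n => pow_nonneg hr₀ n
  refine Summable.of_norm_bounded ((hgeo.mul_of_nonneg hgeo hnonneg hnonneg).mul_left C) ?_
  simpa only [pow_add] using hF

theorem tsum_neg_one_pow_mul_eq_sub [CompleteSpace 𝕜] {w : ℕ → 𝕜}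
    (hw : Summable fun j => ‖w j‖) :
    ∑' j, (-1) ^ j * w j = ∑' n, w (2 * n) - ∑' n, w (2 * n + 1) := by
  set f : ℕ → 𝕜 := fun j => (-1) ^ j * w j with hf
  have hsum : Summable f := hw.of_norm_bounded fun j => by simp [hf]
  have heven : ∀ n, f (2 * n) = w (2 * n) := fun n => by simp [hf, pow_mul]
  have hodd : ∀ n, f (2 * n + 1) = -w (2 * n + 1) := fun n => by simp [hf, pow_succ, pow_mul]
  have hsum_even : Summable (f ∘ (2 * ·)) := hsum.comp_injective fun a b h => by omega
  have hsum_odd : Summable (f ∘ (2 * · + 1)) := hsum.comp_injective fun a b h => by omega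
  rw [← tsum_even_add_odd hsum_even hsum_odd]
  simp only [heven, hodd, tsum_neg, sub_eq_add_neg]

theorem div_one_add_eq_tsum {x : 𝕜} (hx : ‖x‖ < 1) :
    x / (1 + x) = ∑' j : ℕ, (-1) ^ j * x ^ (j + 1) := by
  have hgeo := tsum_geometric_of_norm_lt_one (ξ := -x) (by rwa [norm_neg])
  rw [sub_neg_eq_add] at hgeo
  rw [div_eq_mul_inv, ← hgeo, ← tsum_mul_left]
  congr 1 with j
  rw [neg_pow, pow_succ']
  ring

theorem tsum_pow_add_mul (hq : ‖q‖ < 1) (a : ℕ) {b : ℕ} (hb : b ≠ 0) :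
    ∑' m : ℕ, q ^ ((a + m) * b) = q ^ (a * b) / (1 - q ^ b) := by
  have hqb : ‖q ^ b‖ < 1 := by
    rw [norm_pow]; exact pow_lt_one₀ (norm_nonneg q) hq hb
  rw [div_eq_mul_inv, ← tsum_geometric_of_norm_lt_one hqb, ← tsum_mul_left]
  congr 1 with m
  rw [← pow_mul, ← pow_add, add_mul, mul_comm m]

theorem tsum_pow_div_one_add_pow [CompleteSpace 𝕜] (hq : ‖q‖ < 1) {a : ℕ} (ha : a ≠ 0) :
    ∑' m : ℕ, q ^ (a + m) / (1 + q ^ (a + m)) =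
      ∑' n : ℕ, q ^ (a * (2 * n + 1)) / (1 - q ^ (2 * n + 1)) -
        ∑' n : ℕ, q ^ (a * (2 * (n + 1))) / (1 - q ^ (2 * (n + 1))) := by
  have hpos : 0 < 1 - ‖q‖ := sub_pos.mpr hq
  have hF : Summable (Function.uncurry fun m j : ℕ => (-1 : 𝕜) ^ j * q ^ ((a + m) * (j + 1))) := by
    refine summable_of_norm_le_mul_pow_add (norm_nonneg q) hq (C := 1) fun ⟨m, j⟩ => ?_
    simp only [Function.uncurry_apply_pair, norm_mul, norm_pow, norm_neg, norm_one, one_pow,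
      one_mul]
    exact pow_le_pow_of_le_one (norm_nonneg q) hq.le (by nlinarith [Nat.one_le_iff_ne_zero.mpr ha])
  have hw : Summable fun j : ℕ => ‖q ^ (a * (j + 1)) / (1 - q ^ (j + 1))‖ := by
    refine (summable_geometric_of_lt_one (norm_nonneg q) hq).mul_left (1 - ‖q‖)⁻¹
      |>.of_nonneg_of_le (fun _ => norm_nonneg _) fun j => ?_
    exact norm_pow_div_le hq.le (by nlinarith [Nat.one_le_iff_ne_zero.mpr ha]) hpos
      (one_sub_norm_le_norm_one_sub_pow hq.le j.succ_ne_zero)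
  calc ∑' m : ℕ, q ^ (a + m) / (1 + q ^ (a + m))
      = ∑' m : ℕ, ∑' j : ℕ, (-1) ^ j * q ^ ((a + m) * (j + 1)) := by
        refine tsum_congr fun m => ?_
        have hqm : ‖q ^ (a + m)‖ < 1 := by
          rw [norm_pow]; exact pow_lt_one₀ (norm_nonneg q) hq (by omega)
        simp only [div_one_add_eq_tsum hqm, ← pow_mul]
    _ = ∑' j : ℕ, (-1) ^ j * (q ^ (a * (j + 1)) / (1 - q ^ (j + 1))) := by
        rw [← hF.tsum_comm]
        refine tsum_congr fun j => ?_
        rw [tsum_mul_left, tsum_pow_add_mul hq a j.succ_ne_zero]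
    _ = _ := tsum_neg_one_pow_mul_eq_sub hw

noncomputable def oddTerm (q : 𝕜) (k n : ℕ) : 𝕜 :=
  q ^ (2 * (k + 1) * (n + 1)) / ((1 - q ^ (2 * n + 1)) * (1 + q ^ (2 * k + 1)))

noncomputable def evenTerm (q : 𝕜) (k n : ℕ) : 𝕜 :=
  q ^ (2 * (k + 1) * (n + 1) + (k + 1)) / ((1 - q ^ (2 * (n + 1))) * (1 + q ^ (2 * k + 1)))

theorem summable_uncurry_oddTerm [CompleteSpace 𝕜] (hq : ‖q‖ < 1) :
    Summable (Function.uncurry (oddTerm q)) :=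
  summable_of_norm_le_mul_pow_add (norm_nonneg q) hq fun ⟨k, n⟩ =>
    norm_pow_div_mul_le hq (by dsimp only; nlinarith)
      (one_sub_norm_le_norm_one_sub_pow hq.le (by omega))
      (one_sub_norm_le_norm_one_add_pow hq.le (by omega))

theorem summable_uncurry_evenTerm [CompleteSpace 𝕜] (hq : ‖q‖ < 1) :
    Summable (Function.uncurry (evenTerm q)) :=
  summable_of_norm_le_mul_pow_add (norm_nonneg q) hq fun ⟨k, n⟩ =>
    norm_pow_div_mul_le hq (by dsimp only; nlinarith)
      (one_sub_norm_le_norm_one_sub_pow hq.le (by omega))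
      (one_sub_norm_le_norm_one_add_pow hq.le (by omega))

theorem tsum_aser_inner_eq [CompleteSpace 𝕜] (hq : ‖q‖ < 1) (k : ℕ) :
    ∑' m : ℕ, q ^ ((k + 1) + (k + 1 + m)) / ((1 + q ^ (k + 1 + m)) * (1 + q ^ (2 * k + 1))) =
      ∑' n : ℕ, oddTerm q k n - ∑' n : ℕ, evenTerm q k n := by
  set c := q ^ (k + 1) / (1 + q ^ (2 * k + 1))
  have hfactor : ∀ m : ℕ,
      q ^ ((k + 1) + (k + 1 + m)) / ((1 + q ^ (k + 1 + m)) * (1 + q ^ (2 * k + 1))) =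
        q ^ (k + 1 + m) / (1 + q ^ (k + 1 + m)) * c := fun m => by
    rw [div_mul_div_comm, pow_add, mul_comm (q ^ (k + 1))]
  have hodd : ∀ n : ℕ, q ^ ((k + 1) * (2 * n + 1)) / (1 - q ^ (2 * n + 1)) * c = oddTerm q k n :=
    fun n => by
      rw [div_mul_div_comm, ← pow_add, oddTerm]
      congr 2; ring
  have heven : ∀ n : ℕ,
      q ^ ((k + 1) * (2 * (n + 1))) / (1 - q ^ (2 * (n + 1))) * c = evenTerm q k n := fun n => by
    rw [div_mul_div_comm, ← pow_add, evenTerm]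
    congr 2; ring
  simp only [hfactor, tsum_mul_right, tsum_pow_div_one_add_pow hq k.succ_ne_zero, sub_mul,
    ← hodd, ← heven]

end

theorem stmt7 (q : ℂ) (hq : ‖q‖ < 1) :
    Aser q =
      -∑' k : ℕ, ∑' n : ℕ,
          q ^ (2 * (k + 1) * (n + 1) + (k + 1)) /
            ((1 - q ^ (2 * (n + 1))) * (1 + q ^ (2 * k + 1)))
      + Zser q := by
  have hodd := summable_uncurry_oddTerm hq
  have heven := summable_uncurry_evenTerm hq
  have hA : Aser q = ∑' k, ∑' n, oddTerm q k n - ∑' k, ∑' n, evenTerm q k n := by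
    rw [Aser, tsum_congr (tsum_aser_inner_eq hq)]
    exact hodd.prod.tsum_sub heven.prod
  have hZ : Zser q = ∑' k, ∑' n, oddTerm q k n := by
    rw [Zser, ← hodd.tsum_comm]
    refine tsum_congr fun k => tsum_congr fun n => ?_
    rw [oddTerm, mul_comm (1 - _)]
    congr 2; ring
  rw [hA, hZ, sub_eq_neg_add]
  rfl
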